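/- β-soundness implies subject reduction: if 𝒯 is a β-sound intersection type theory, M →_β M', and Γ ⊢ M : A, then Γ ⊢ M' : A. -/

import Mathlib

/-- Pure λ-terms with variables named by natural numbers. -/
inductive Tm : Type
  | var : ℕ → Tm
  | lam : ℕ → Tm → Tm
  | app : Tm → Tm → Tm
deriving DecidableEq

namespace Tm

/-- Free variables of a term. -/
def fv : Tm → Finset ℕ
  | var x => {x}
  | lam x t => fv t \ {x}
  | app t u => fv t ∪ fv u

/-- A variable fresh for a given finite set of variables. -/
def fresh (s : Finset ℕ) : ℕ := (s.sup id) + 1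

/-- Capture-avoiding simultaneous substitution. -/
def subst (σ : ℕ → Tm) : Tm → Tm
  | var x => σ x
  | app t u => app (subst σ t) (subst σ u)
  | lam x t =>
      let y := fresh ((fv t \ {x}).biUnion fun z => fv (σ z))
      lam y (subst (fun z => if z = x then var y else σ z) t)

/-- `M[x := N]`. -/
def subst1 (x : ℕ) (N M : Tm) : Tm :=
  subst (fun z => if z = x then N else var z) M

/-- `λx₁…xₙ. t`. -/
def lams (xs : List ℕ) (t : Tm) : Tm := xs.foldr lam t

/-- `t M₁ ⋯ Mₘ`. -/
def apps (t : Tm) (ts : List Tm) : Tm := ts.foldl app t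

/-- One-step β-reduction: contextual closure of the β-rule. -/
inductive Step : Tm → Tm → Prop
  | beta (x : ℕ) (M N : Tm) : Step (app (lam x M) N) (subst1 x N M)
  | appL {M M' : Tm} (N : Tm) : Step M M' → Step (app M N) (app M' N)
  | appR (M : Tm) {N N' : Tm} : Step N N' → Step (app M N) (app M N')
  | abs (x : ℕ) {M M' : Tm} : Step M M' → Step (lam x M) (lam x M')

/-- β-reduction: reflexive-transitive closure of one-step β-reduction. -/
def Red : Tm → Tm → Prop := Relation.ReflTransGen Step

/-- β-convertibility: the equivalence relation generated by β-reduction. -/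
def Conv : Tm → Tm → Prop := Relation.EqvGen Step

/-- `M` is solvable if `(λx⃗.M) N₁ ⋯ Nₙ` β-reduces to the identity,
where `x⃗` covers the free variables of `M`. -/
def Solvable (M : Tm) : Prop :=
  ∃ (xs : List ℕ) (Ns : List Tm) (y : ℕ),
    M.fv ⊆ xs.toFinset ∧ Red (apps (lams xs M) Ns) (lam y (var y))

/-- One-step head reduction: contraction of the head redex. -/
inductive HeadStep : Tm → Tm → Prop
  | beta (x : ℕ) (M N : Tm) (Ms : List Tm) :
      HeadStep (apps (app (lam x M) N) Ms) (apps (subst1 x N M) Ms)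
  | abs (x : ℕ) {M M' : Tm} : HeadStep M M' → HeadStep (lam x M) (lam x M')

end Tm

/-- Intersection types over a set `A` of constants, with top `𝖴`. -/
inductive Ty (A : Type) : Type
  | const : A → Ty A
  | top : Ty A
  | arrow : Ty A → Ty A → Ty A
  | inter : Ty A → Ty A → Ty A
deriving DecidableEq

/-- An intersection type theory: a subtyping relation on `Ty A` closed under
(Refl), (IncL), (IncR), (𝖴top), (Glb), (Trans) and (→∼). -/
structure ITT (A : Type) where
  le : Ty A → Ty A → Prop
  le_refl : ∀ a, le a a
  le_incL : ∀ a b, le (Ty.inter b a) b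
  le_incR : ∀ a b, le (Ty.inter b a) a
  le_top : ∀ a, le a Ty.top
  le_glb : ∀ {a b c}, le c a → le c b → le c (Ty.inter a b)
  le_trans : ∀ {a b c}, le a b → le b c → le a c
  arrow_cong : ∀ {a a' b b'}, le a a' → le a' a → le b b' → le b' b →
      le (Ty.arrow a b) (Ty.arrow a' b')

variable {A : Type}

/-- The equivalence `∼` induced by the subtyping. -/
def ITT.eqv (T : ITT A) (a b : Ty A) : Prop := T.le a b ∧ T.le b a

/-- Bases: (partial) mappings from term variables to types. -/
def Ctx (A : Type) := ℕ → Option (Ty A)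

def Ctx.empty : Ctx A := fun _ => none

/-- `Γ, x:a`. -/
def Ctx.update (Γ : Ctx A) (x : ℕ) (a : Ty A) : Ctx A :=
  fun y => if y = x then some a else Γ y

/-- The intersection type assignment system induced by an itt `T`:
rules (Ax), (𝖴), (→I), (→E), (∩I) and (≤). -/
inductive Der (T : ITT A) : Ctx A → Tm → Ty A → Prop
  | ax {Γ : Ctx A} {x a} : Γ x = some a → Der T Γ (Tm.var x) a
  | top {Γ M} : Der T Γ M Ty.top
  | arrI {Γ : Ctx A} {x M a b} :
      Der T (Γ.update x b) M a → Der T Γ (Tm.lam x M) (Ty.arrow b a)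
  | arrE {Γ M N a b} :
      Der T Γ M (Ty.arrow b a) → Der T Γ N b → Der T Γ (Tm.app M N) a
  | interI {Γ M a b} : Der T Γ M a → Der T Γ M b → Der T Γ M (Ty.inter a b)
  | sub {Γ M a b} : Der T Γ M a → T.le a b → Der T Γ M b

/-- Finite intersection `⋂_{i∈I} Aᵢ`, with `⋂_∅ = 𝖴`. -/
def interList : List (Ty A) → Ty A
  | [] => Ty.top
  | a :: l => Ty.inter a (interList l)

/-- β-soundness of an itt: whenever `A ≁ 𝖴` and `⋂ᵢ(Bᵢ → Aᵢ) ≤ B → A`, there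
is a subfamily `J ⊆ I` with `B ≤ ⋂_{j∈J} Bⱼ` and `⋂_{j∈J} Aⱼ ≤ A`. -/
def BetaSound {A : Type} (T : ITT A) : Prop :=
  ∀ (l : List (Ty A × Ty A)) (b a : Ty A), ¬ T.eqv a Ty.top →
    T.le (interList (l.map fun p => Ty.arrow p.1 p.2)) (Ty.arrow b a) →
    ∃ l' : List (Ty A × Ty A), l'.Sublist l ∧
      T.le b (interList (l'.map Prod.fst)) ∧
      T.le (interList (l'.map Prod.snd)) a

/-! Subject reduction is proved by induction on the step. Generation lemmas invert a typing of
an application or an abstraction: up to subsumption, its type lies above a finite intersection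
of types given by the direct rules. In the redex case `(λx.M) N`, this yields `λx.M : B → C`
and `N : B`; the abstraction, however, may only have received `B → C` by subsumption from an
intersection `⋂ᵢ (Bᵢ → Cᵢ)` with `M : Cᵢ` under `x : Bᵢ`. β-soundness selects the `Bᵢ → Cᵢ`
that matter, so that `M : C` under `x : B`, and the substitution lemma concludes. -/

theorem Tm.fresh_not_mem (s : Finset ℕ) : Tm.fresh s ∉ s := fun hmem => by
  have : id (Tm.fresh s) ≤ s.sup id := Finset.le_sup hmem
  simp only [Tm.fresh, id] at this
  omega

namespace ITT

variable {T : ITT A}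

theorem interList_le_of_mem {l : List (Ty A)} {c : Ty A} (hc : c ∈ l) :
    T.le (interList l) c := by
  induction l with
  | nil => cases hc
  | cons d l ih =>
    rcases List.mem_cons.mp hc with rfl | hc
    · exact T.le_incL _ _
    · exact T.le_trans (T.le_incR _ _) (ih hc)

theorem le_interList {l : List (Ty A)} {c : Ty A} (h : ∀ d ∈ l, T.le c d) :
    T.le c (interList l) := by
  induction l with
  | nil => exact T.le_top c
  | cons d l ih =>
    exact T.le_glb (h d List.mem_cons_self) (ih fun e he => h e (List.mem_cons_of_mem d he))

def AboveInter {α : Type*} (T : ITT A) (Q : α → Prop) (f : α → Ty A) (a : Ty A) : Prop :=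
  ∃ l : List α, (∀ p ∈ l, Q p) ∧ T.le (interList (l.map f)) a

namespace AboveInter

variable {α : Type*} {Q : α → Prop} {f : α → Ty A} {a b : Ty A}

theorem top : T.AboveInter Q f Ty.top :=
  ⟨[], by simp, T.le_refl _⟩

theorem single {p : α} (hp : Q p) : T.AboveInter Q f (f p) :=
  ⟨[p], by simpa using hp, T.le_incL _ _⟩

theorem inter (ha : T.AboveInter Q f a) (hb : T.AboveInter Q f b) :
    T.AboveInter Q f (Ty.inter a b) := by
  obtain ⟨la, hQa, hla⟩ := ha
  obtain ⟨lb, hQb, hlb⟩ := hb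
  refine ⟨la ++ lb, fun p hp => (List.mem_append.mp hp).elim (hQa p) (hQb p), ?_⟩
  rw [List.map_append]
  exact T.le_glb
    (T.le_trans (le_interList fun d hd => interList_le_of_mem (List.mem_append_left _ hd)) hla)
    (T.le_trans (le_interList fun d hd => interList_le_of_mem (List.mem_append_right _ hd)) hlb)

theorem of_le (ha : T.AboveInter Q f a) (hab : T.le a b) : T.AboveInter Q f b :=
  let ⟨l, hQ, hl⟩ := ha
  ⟨l, hQ, T.le_trans hl hab⟩

end AboveInter

end ITT

namespace Der

variable {T : ITT A} {Γ Γ' : Ctx A} {M N : Tm} {x : ℕ} {a b : Ty A}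

theorem interList {l : List (Ty A)} (h : ∀ c ∈ l, Der T Γ M c) : Der T Γ M (interList l) := by
  induction l with
  | nil => exact top
  | cons d l ih =>
    exact interI (h d List.mem_cons_self) (ih fun c hc => h c (List.mem_cons_of_mem d hc))

theorem of_aboveInter {α : Type*} {Q : α → Prop} {f : α → Ty A}
    (ha : T.AboveInter Q f a) (hQ : ∀ p, Q p → Der T Γ M (f p)) : Der T Γ M a :=
  let ⟨_, hl, hle⟩ := ha
  sub (Der.interList fun _ hc =>
    let ⟨p, hp, hfp⟩ := List.mem_map.mp hc
    hfp ▸ hQ p (hl p hp)) hle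

theorem mono (h : Der T Γ M a)
    (hΓ : ∀ y ∈ M.fv, ∀ c, Γ y = some c → ∃ c', Γ' y = some c' ∧ T.le c' c) :
    Der T Γ' M a := by
  induction h generalizing Γ' with
  | ax hx =>
    obtain ⟨c', hc', hle⟩ := hΓ _ (Finset.mem_singleton_self _) _ hx
    exact sub (ax hc') hle
  | top => exact top
  | @arrI Γ x M a b _ ih =>
    refine arrI (ih fun y hy c hc => ?_)
    by_cases hyx : y = x
    · subst hyx
      simp only [Ctx.update, ↓reduceIte] at hc ⊢
      exact ⟨c, hc, T.le_refl c⟩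
    · simp only [Ctx.update, if_neg hyx] at hc ⊢
      exact hΓ y (by simp [Tm.fv, hy, hyx]) c hc
  | arrE _ _ ihM ihN =>
    exact arrE (ihM fun y hy => hΓ y (by simp [Tm.fv, hy]))
      (ihN fun y hy => hΓ y (by simp [Tm.fv, hy]))
  | interI _ _ ih₁ ih₂ => exact interI (ih₁ hΓ) (ih₂ hΓ)
  | sub _ hle ih => exact sub (ih hΓ) hle

theorem update_of_not_mem_fv (h : Der T Γ M a) (hx : x ∉ M.fv) (b : Ty A) :
    Der T (Γ.update x b) M a :=
  h.mono fun y hy c hc =>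
    ⟨c, by rw [Ctx.update, if_neg (ne_of_mem_of_not_mem hy hx)]; exact hc, T.le_refl c⟩

theorem update_le {b' : Ty A} (h : Der T (Γ.update x b) M a) (hb : T.le b' b) :
    Der T (Γ.update x b') M a := by
  refine h.mono fun y _ c hc => ?_
  by_cases hyx : y = x
  · subst hyx
    simp only [Ctx.update, ↓reduceIte, Option.some.injEq] at hc ⊢
    exact ⟨b', rfl, hc ▸ hb⟩
  · simp only [Ctx.update, if_neg hyx] at hc ⊢
    exact ⟨c, hc, T.le_refl c⟩

theorem subst {σ : ℕ → Tm} (h : Der T Γ' M a)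
    (hσ : ∀ z ∈ M.fv, ∀ c, Γ' z = some c → Der T Γ (σ z) c) :
    Der T Γ (M.subst σ) a := by
  induction h generalizing Γ σ with
  | ax hx => exact hσ _ (Finset.mem_singleton_self _) _ hx
  | top => exact top
  | @arrI Γ' x M a b _ ih =>
    refine arrI (ih fun z hz c hc => ?_)
    by_cases hzx : z = x
    · subst hzx
      simp only [Ctx.update, ↓reduceIte, Option.some.injEq] at hc ⊢
      subst hc
      exact ax (by simp [Ctx.update])
    · simp only [Ctx.update, if_neg hzx] at hc ⊢
      -- the bound variable is renamed to one that is fresh for every `σ z`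
      refine (hσ z (by simp [Tm.fv, hz, hzx]) c hc).update_of_not_mem_fv
        (fun hmem => Tm.fresh_not_mem _ (Finset.mem_biUnion.mpr ⟨z, ?_, hmem⟩)) b
      simp [hz, hzx]
  | arrE _ _ ihM ihN =>
    exact arrE (ihM fun z hz => hσ z (by simp [Tm.fv, hz]))
      (ihN fun z hz => hσ z (by simp [Tm.fv, hz]))
  | interI _ _ ih₁ ih₂ => exact interI (ih₁ hσ) (ih₂ hσ)
  | sub _ hle ih => exact sub (ih hσ) hle

theorem subst1 (hM : Der T (Γ.update x b) M a) (hN : Der T Γ N b) :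
    Der T Γ (Tm.subst1 x N M) a := by
  refine hM.subst fun z _ c hc => ?_
  by_cases hzx : z = x
  · subst hzx
    simp only [Ctx.update, ↓reduceIte, Option.some.injEq] at hc ⊢
    exact hc ▸ hN
  · simp only [Ctx.update, if_neg hzx] at hc ⊢
    exact ax hc

theorem app_inv (h : Der T Γ (Tm.app M N) a) :
    T.AboveInter (fun p : Ty A × Ty A => Der T Γ M (Ty.arrow p.1 p.2) ∧ Der T Γ N p.1)
      Prod.snd a := by
  generalize hP : Tm.app M N = P at h
  induction h with
  | ax => cases hP
  | top => exact .top
  | arrI => cases hP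
  | arrE hM hN =>
    cases hP
    exact .single (p := (_, _)) ⟨hM, hN⟩
  | interI _ _ ih₁ ih₂ => exact (ih₁ hP).inter (ih₂ hP)
  | sub _ hle ih => exact (ih hP).of_le hle

theorem lam_inv (h : Der T Γ (Tm.lam x M) a) :
    T.AboveInter (fun p : Ty A × Ty A => Der T (Γ.update x p.1) M p.2)
      (fun p => Ty.arrow p.1 p.2) a := by
  generalize hP : Tm.lam x M = P at h
  induction h with
  | ax => cases hP
  | top => exact .top
  | arrI hM =>
    cases hP
    exact .single (p := (_, _)) hM
  | arrE => cases hP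
  | interI _ _ ih₁ ih₂ => exact (ih₁ hP).inter (ih₂ hP)
  | sub _ hle ih => exact (ih hP).of_le hle

theorem subst1_of_lam (hT : BetaSound T) {c : Ty A} (hlam : Der T Γ (Tm.lam x M) (Ty.arrow b c))
    (hN : Der T Γ N b) : Der T Γ (Tm.subst1 x N M) c := by
  by_cases htop : T.eqv c Ty.top
  · exact sub top htop.2
  obtain ⟨l, hl, hle⟩ := hlam.lam_inv
  obtain ⟨l', hl'l, hb, hc⟩ := hT l b c htop hle
  have hM : Der T (Γ.update x b) M (_root_.interList (l'.map Prod.snd)) :=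
    Der.interList fun d hd => by
      obtain ⟨q, hq, rfl⟩ := List.mem_map.mp hd
      exact (hl q (hl'l.mem hq)).update_le
        (T.le_trans hb (ITT.interList_le_of_mem (List.mem_map_of_mem hq)))
  exact (sub hM hc).subst1 hN

end Der

/-- β-soundness implies subject reduction. -/
theorem betaSound_subject_reduction {A : Type} (T : ITT A)
    (hT : BetaSound T) (Γ : Ctx A) (M M' : Tm) (a : Ty A)
    (hstep : Tm.Step M M') (h : Der T Γ M a) :
    Der T Γ M' a := by
  induction hstep generalizing Γ a with
  | beta => exact Der.of_aboveInter h.app_inv fun _ ⟨hlam, hN⟩ => hlam.subst1_of_lam hT hN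
  | appL _ _ ih => exact Der.of_aboveInter h.app_inv fun _ ⟨hM, hN⟩ => .arrE (ih _ _ hM) hN
  | appR _ _ ih => exact Der.of_aboveInter h.app_inv fun _ ⟨hM, hN⟩ => .arrE hM (ih _ _ hN)
  | abs _ _ ih => exact Der.of_aboveInter h.lam_inv fun _ hM => .arrI (ih _ _ hM)
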